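/- arXiv:1603.01744 — 2 statements merged into one kernel-verified Lean document; each statement's English description precedes it below -/
import Mathlib

section
/- Let M ≥ 2, d ≥ 2, let A = (A_1,…,A_M) be an irreducible tuple of d×d real matrices, and set P := P(A,2) (which is finite by irreducibility). Let Q and Q̂ be symmetric positive definite d×d real matrices satisfying Σ_{i=1}^M A_i^T Q A_i = e^P Q, Σ_{i=1}^M A_i Q̂ A_i^T = e^P Q̂, and tr(Q Q̂) = 1. Then there exists a σ-invariant Borel probability measure μ on Σ_M (the Kusuoka measure of A) such that μ([x_1⋯x_n]) = e^{−nP} tr( Q̂ (A_{x_n}⋯A_{x_1})^T Q (A_{x_n}⋯A_{x_1}) ) for every n ≥ 1 and all x_1,…,x_n ∈ {1,…,M}. -/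
open MeasureTheory Filter Topology Matrix

/-- The operator norm on square real matrices induced by the Euclidean norm. -/
noncomputable def opNorm {n : Type*} [Fintype n] [DecidableEq n]
    (X : Matrix n n ℝ) : ℝ :=
  ‖Matrix.toEuclideanCLM (𝕜 := ℝ) X‖

/-- The spectral radius `ρ(X) = inf_{k ≥ 1} ‖X^k‖^(1/k)` (Gelfand). -/
noncomputable def specRad {n : Type*} [Fintype n] [DecidableEq n]
    (X : Matrix n n ℝ) : ℝ :=
  ⨅ k : ℕ, opNorm (X ^ (k + 1)) ^ ((1 : ℝ) / (k + 1))

/-- The product `A_{x_n} ⋯ A_{x_1}` associated to the word `x = (x_1, …, x_n)`. -/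
noncomputable def wordProd {M d n : ℕ} (A : Fin M → Matrix (Fin d) (Fin d) ℝ)
    (x : Fin n → Fin M) : Matrix (Fin d) (Fin d) ℝ :=
  (List.ofFn (fun i => A (x i))).reverse.prod

/-- The product `A_{x_n} ⋯ A_{x_1}` associated to the word `w = [x_1, …, x_n]`. -/
noncomputable def listProd {M d : ℕ} (A : Fin M → Matrix (Fin d) (Fin d) ℝ)
    (w : List (Fin M)) : Matrix (Fin d) (Fin d) ℝ :=
  ((w.map A).reverse).prod

/-- Irreducibility: no invariant subspace `U` with `0 < dim U < d`. -/
def IsIrredTuple {M d : ℕ} (A : Fin M → Matrix (Fin d) (Fin d) ℝ) : Prop :=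
  ¬ ∃ U : Submodule ℝ (Fin d → ℝ),
      (∀ i, U.map (A i).mulVecLin ≤ U) ∧ U ≠ ⊥ ∧ U ≠ ⊤

/-- The shift map on `Σ_M = {1,…,M}^ℕ`. -/
def shift {M : ℕ} : (ℕ → Fin M) → (ℕ → Fin M) := fun x n => x (n + 1)

/-- The cylinder set `[x_1 ⋯ x_n]` determined by the word `w = [x_1, …, x_n]`. -/
def cyl {M : ℕ} (w : List (Fin M)) : Set (ℕ → Fin M) :=
  {y | ∀ i : Fin w.length, y (i : ℕ) = w.get i}

/-- The Gibbs inequality for `(A, s)` with constants `C > 0`, `P ∈ ℝ`. -/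
def IsGibbs {M d : ℕ} (A : Fin M → Matrix (Fin d) (Fin d) ℝ) (s C P : ℝ)
    (μ : Measure (ℕ → Fin M)) : Prop :=
  ∀ w : List (Fin M), w ≠ [] →
    C⁻¹ * (μ (cyl w)).toReal ≤ Real.exp (-(w.length : ℝ) * P) * opNorm (listProd A w) ^ s ∧
    Real.exp (-(w.length : ℝ) * P) * opNorm (listProd A w) ^ s ≤ C * (μ (cyl w)).toReal

/-- The pressure `P(A,s) = inf_{n ≥ 1} (1/n) log Σ_{|x| = n} ‖A_{x_n} ⋯ A_{x_1}‖^s ∈ [-∞, ∞)`,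
with the convention that a term is `-∞` when the corresponding sum vanishes. -/
noncomputable def pressure {M d : ℕ} (A : Fin M → Matrix (Fin d) (Fin d) ℝ) (s : ℝ) : EReal :=
  ⨅ n : ℕ,
    if (∑ x : Fin (n + 1) → Fin M, opNorm (wordProd A x) ^ s) = 0 then (⊥ : EReal)
    else ((Real.log (∑ x : Fin (n + 1) → Fin M, opNorm (wordProd A x) ^ s) / (n + 1) : ℝ) : EReal)


/-!
The two eigen-equations say exactly that `p w = e^{-|w|P} tr(Q̂ A_wᵀ Q A_w)` is consistent under
extension of words on the right (`Σᵢ p(wi) = p(w)`, from the equation for `Q`) and on the left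
(`Σᵢ p(iw) = p(w)`, from the equation for `Q̂`), while positivity of `Q, Q̂` gives `p ≥ 0` and
`tr(QQ̂) = 1` gives `p(∅) = 1`. Right consistency alone produces a probability measure with
cylinder masses `p`: cut `[0, 1)` into nested intervals of lengths `p w` and push Lebesgue measure
forward along the resulting coding map. Left consistency then gives shift invariance, because
`σ⁻¹[w]` is the disjoint union of the cylinders `[iw]` and cylinders form a generating π-system.
-/

open Finset

section Cylinders

variable {M : ℕ}

lemma mem_cyl_iff_ofFn {w : List (Fin M)} {y : ℕ → Fin M} :
    y ∈ cyl w ↔ List.ofFn (fun i : Fin w.length => y i) = w := by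
  show (∀ i : Fin w.length, y i = w.get i) ↔ _
  rw [← funext_iff, ← List.ofFn_inj, List.ofFn_get]

lemma measurableSet_cyl (w : List (Fin M)) : MeasurableSet (cyl w) := by
  simp only [cyl, Set.ofPred_forall]
  exact .iInter fun i => measurableSet_eq_fun (measurable_pi_apply _) measurable_const

lemma cyl_nil : cyl ([] : List (Fin M)) = Set.univ :=
  Set.eq_univ_of_forall fun _ i => i.elim0

lemma cyl_subset_cyl_of_mem {w v : List (Fin M)} {y : ℕ → Fin M} (hwv : w.length ≤ v.length)
    (hyw : y ∈ cyl w) (hyv : y ∈ cyl v) : cyl v ⊆ cyl w := by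
  intro z hz i
  have hi : (i : ℕ) < v.length := i.isLt.trans_le hwv
  rw [hz ⟨i, hi⟩, ← hyv ⟨i, hi⟩, hyw i]

lemma isPiSystem_range_cyl : IsPiSystem (Set.range (cyl (M := M))) := by
  rintro _ ⟨w, rfl⟩ _ ⟨v, rfl⟩ ⟨y, hyw, hyv⟩
  rcases le_total w.length v.length with h | h
  · exact ⟨v, (Set.inter_eq_right.2 (cyl_subset_cyl_of_mem h hyw hyv)).symm⟩
  · exact ⟨w, (Set.inter_eq_left.2 (cyl_subset_cyl_of_mem h hyv hyw)).symm⟩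

lemma eval_preimage_eq_iUnion_cyl (n : ℕ) (t : Set (Fin M)) :
    (fun y : ℕ → Fin M => y n) ⁻¹' t =
      ⋃ (w : List (Fin M)) (_ : ∃ h : n < w.length, w[n] ∈ t), cyl w := by
  ext y
  simp only [Set.mem_preimage, Set.mem_iUnion]
  constructor
  · intro hy
    refine ⟨List.ofFn fun k : Fin (n + 1) => y k,
      ⟨by simp, by simpa [-List.ofFn_succ] using hy⟩, fun i => by simp [-List.ofFn_succ]⟩
  · rintro ⟨w, ⟨hn, hw⟩, hyw⟩
    simpa [hyw ⟨n, hn⟩] using hw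

lemma generateFrom_range_cyl :
    MeasurableSpace.generateFrom (Set.range (cyl (M := M))) = MeasurableSpace.pi := by
  refine le_antisymm (MeasurableSpace.generateFrom_le ?_) ?_
  · rintro _ ⟨w, rfl⟩
    exact measurableSet_cyl w
  · rw [MeasurableSpace.pi_eq_generateFrom_projections]
    refine MeasurableSpace.generateFrom_le ?_
    rintro _ ⟨n, t, -, rfl⟩
    rw [show Function.eval n = fun y : ℕ → Fin M => y n from rfl, eval_preimage_eq_iUnion_cyl]
    exact .iUnion fun w => .iUnion fun _ => MeasurableSpace.measurableSet_generateFrom ⟨w, rfl⟩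

lemma MeasureTheory.Measure.ext_of_cyl {μ ν : Measure (ℕ → Fin M)} [IsFiniteMeasure μ]
    (h : ∀ w, μ (cyl w) = ν (cyl w)) : μ = ν :=
  ext_of_generate_finite _ generateFrom_range_cyl.symm isPiSystem_range_cyl
    (by rintro _ ⟨w, rfl⟩; exact h w) (by rw [← cyl_nil]; exact h [])

lemma measurable_shift : Measurable (shift (M := M)) :=
  measurable_pi_lambda _ fun n => measurable_pi_apply (n + 1)

lemma shift_preimage_cyl (w : List (Fin M)) :
    shift ⁻¹' cyl w = ⋃ i, cyl (i :: w) := by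
  ext y
  simp [mem_cyl_iff_ofFn, List.ofFn_succ, shift]

lemma pairwise_disjoint_cyl_cons (w : List (Fin M)) :
    Pairwise (Function.onFun Disjoint fun i => cyl (i :: w)) := fun i j hij =>
  Set.disjoint_left.2 fun _ hi hj => hij ((hi ⟨0, by simp⟩).symm.trans (hj ⟨0, by simp⟩))

lemma measurePreserving_shift {μ : Measure (ℕ → Fin M)} [IsFiniteMeasure μ]
    (h : ∀ w, ∑ i, μ (cyl (i :: w)) = μ (cyl w)) : MeasurePreserving shift μ μ := by
  refine ⟨measurable_shift, Measure.ext_of_cyl fun w => ?_⟩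
  rw [Measure.map_apply measurable_shift (measurableSet_cyl w), shift_preimage_cyl,
    measure_iUnion (pairwise_disjoint_cyl_cons w) fun _ => measurableSet_cyl _, tsum_fintype, h]

end Cylinders

section Coding

variable {M : ℕ} (p : List (Fin M) → ℝ)

/-- Kolmogorov consistency of prospective cylinder masses `p w = μ [w]`. -/
structure IsConsistentWeight : Prop where
  nil : p [] = 1
  nonneg : ∀ w, 0 ≤ p w
  sum_append_singleton : ∀ w, ∑ i, p (w ++ [i]) = p w

noncomputable def childOffset (w : List (Fin M)) (k : ℕ) : ℝ :=
  ∑ j ∈ univ.filter (fun j : Fin M => (j : ℕ) < k), p (w ++ [j])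

noncomputable def lowerEndRev : List (Fin M) → ℝ
  | [] => 0
  | i :: r => lowerEndRev r + childOffset p r.reverse i

noncomputable def lowerEnd (w : List (Fin M)) : ℝ := lowerEndRev p w.reverse

def cell (w : List (Fin M)) : Set ℝ := Set.Ico (lowerEnd p w) (lowerEnd p w + p w)

variable {p}

lemma lowerEnd_append_singleton (w : List (Fin M)) (i : Fin M) :
    lowerEnd p (w ++ [i]) = lowerEnd p w + childOffset p w i := by
  simp [lowerEnd, lowerEndRev]

lemma childOffset_zero (w : List (Fin M)) : childOffset p w 0 = 0 := by
  simp [childOffset]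

lemma childOffset_succ (w : List (Fin M)) {k : ℕ} (hk : k < M) :
    childOffset p w (k + 1) = childOffset p w k + p (w ++ [⟨k, hk⟩]) := by
  have : univ.filter (fun j : Fin M => (j : ℕ) < k + 1) =
      insert ⟨k, hk⟩ (univ.filter fun j : Fin M => (j : ℕ) < k) := by
    ext j
    simp only [mem_filter, mem_univ, true_and, mem_insert, Fin.ext_iff]
    omega
  rw [childOffset, this, sum_insert (by simp), add_comm]
  rfl

lemma cell_append_singleton (w : List (Fin M)) (i : Fin M) :
    cell p (w ++ [i]) =
      Set.Ico (lowerEnd p w + childOffset p w i) (lowerEnd p w + childOffset p w (i + 1)) := by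
  rw [cell, lowerEnd_append_singleton, childOffset_succ w i.isLt, add_assoc]

lemma volume_cell (w : List (Fin M)) : volume (cell p w) = ENNReal.ofReal (p w) := by
  rw [cell, Real.volume_Ico, add_sub_cancel_left]

namespace IsConsistentWeight

variable (hp : IsConsistentWeight p)
include hp

lemma neZero : NeZero M := by
  refine ⟨fun hM => ?_⟩
  subst hM
  simpa using (hp.sum_append_singleton []).trans hp.nil

lemma childOffset_mono (w : List (Fin M)) : Monotone (childOffset p w) := fun _ _ hkl =>
  sum_le_sum_of_subset_of_nonneg (monotone_filter_right _ fun _ _ hj => hj.trans_le hkl)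
    fun _ _ _ => hp.nonneg _

lemma childOffset_of_le (w : List (Fin M)) {k : ℕ} (hk : M ≤ k) : childOffset p w k = p w := by
  rw [childOffset, filter_true_of_mem fun j _ => j.isLt.trans_le hk, hp.sum_append_singleton]

lemma cell_append_singleton_subset (w : List (Fin M)) (i : Fin M) :
    cell p (w ++ [i]) ⊆ cell p w := by
  rw [cell_append_singleton]
  refine Set.Ico_subset_Ico ?_ ?_
  · simpa [childOffset_zero] using hp.childOffset_mono w (Nat.zero_le i)
  · simpa [hp.childOffset_of_le w le_rfl] using hp.childOffset_mono w (Nat.succ_le_of_lt i.isLt)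

lemma cell_subset_iUnion_cell_append_singleton (w : List (Fin M)) :
    cell p w ⊆ ⋃ i, cell p (w ++ [i]) := by
  intro t ht
  have := Ico_subset_biUnion_Ico M (fun k => lowerEnd p w + childOffset p w k)
    (by simpa [cell, childOffset_zero, hp.childOffset_of_le w le_rfl] using ht)
  obtain ⟨k, hk, hkt⟩ := by simpa only [Set.mem_iUnion, mem_range, exists_prop] using this
  exact Set.mem_iUnion.2 ⟨⟨k, hk⟩, by rwa [cell_append_singleton]⟩

lemma lowerEnd_append_singleton_add_le {w : List (Fin M)} {i j : Fin M} (hij : i < j) :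
    lowerEnd p (w ++ [i]) + p (w ++ [i]) ≤ lowerEnd p (w ++ [j]) := by
  rw [lowerEnd_append_singleton, lowerEnd_append_singleton, add_assoc, ← childOffset_succ]
  gcongr
  exact hp.childOffset_mono w hij

end IsConsistentWeight

variable [NeZero M] (p)

/-- `insert 0` only makes the set nonempty: for `t ∈ cell p w` the child `0` qualifies anyway. -/
noncomputable def digit (t : ℝ) (w : List (Fin M)) : Fin M :=
  (insert 0 (univ.filter fun i => lowerEnd p (w ++ [i]) ≤ t)).max' (insert_nonempty _ _)

noncomputable def codeWord (t : ℝ) : ℕ → List (Fin M)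
  | 0 => []
  | n + 1 => codeWord t n ++ [digit p t (codeWord t n)]

noncomputable def code (t : ℝ) (n : ℕ) : Fin M := digit p t (codeWord p t n)

variable {p}

lemma digit_mono (w : List (Fin M)) : Monotone fun t => digit p t w := fun _ _ hst => by
  unfold digit
  exact max'_subset (insert_nonempty _ _)
    (insert_subset_insert _ (monotone_filter_right _ fun _ _ hi => hi.trans hst))

lemma IsConsistentWeight.digit_eq_of_mem_cell (hp : IsConsistentWeight p) {t : ℝ}
    {w : List (Fin M)} {i : Fin M} (ht : t ∈ cell p (w ++ [i])) : digit p t w = i := by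
  refine le_antisymm ?_ (le_max' _ i (mem_insert_of_mem (by simpa using ht.1)))
  by_contra! hlt
  have hdigit : digit p t w ∈ insert 0 (univ.filter fun j => lowerEnd p (w ++ [j]) ≤ t) :=
    max'_mem _ _
  rcases mem_insert.1 hdigit with h0 | hmem
  · exact Fin.not_lt_zero i (h0 ▸ hlt)
  · have := hp.lowerEnd_append_singleton_add_le (w := w) hlt
    have := (mem_filter.1 hmem).2
    linarith [ht.2]

lemma IsConsistentWeight.mem_cell_digit (hp : IsConsistentWeight p) {t : ℝ}
    {w : List (Fin M)} (ht : t ∈ cell p w) : t ∈ cell p (w ++ [digit p t w]) := by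
  obtain ⟨i, hi⟩ := Set.mem_iUnion.1 (hp.cell_subset_iUnion_cell_append_singleton w ht)
  rwa [hp.digit_eq_of_mem_cell hi]

lemma codeWord_eq_ofFn (t : ℝ) (n : ℕ) :
    codeWord p t n = List.ofFn fun k : Fin n => code p t k := by
  induction n with
  | zero => rfl
  | succ n ih =>
    simp only [List.ofFn_succ', List.concat_eq_append, Fin.val_castSucc, Fin.val_last, ← ih]
    rfl

lemma codeWord_succ_eq_append_singleton_iff {t : ℝ} {n : ℕ} {w : List (Fin M)} {i : Fin M} :
    codeWord p t (n + 1) = w ++ [i] ↔ codeWord p t n = w ∧ digit p t w = i := by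
  constructor
  · intro h
    obtain ⟨rfl, h'⟩ := List.append_inj' h rfl
    exact ⟨rfl, List.singleton_inj.1 h'⟩
  · rintro ⟨rfl, rfl⟩
    rfl

lemma code_preimage_cyl (w : List (Fin M)) :
    code p ⁻¹' cyl w = {t | codeWord p t w.length = w} := by
  ext t
  simp only [Set.mem_preimage, Set.mem_ofPred_eq, mem_cyl_iff_ofFn, codeWord_eq_ofFn]

lemma measurable_code : Measurable (code p) := by
  rw [← generateFrom_range_cyl]
  refine measurable_generateFrom ?_
  rintro _ ⟨w, rfl⟩
  rw [code_preimage_cyl]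
  induction w using List.reverseRecOn with
  | nil => simp [codeWord]
  | append_singleton w i ih =>
    simp only [List.length_append, List.length_singleton, codeWord_succ_eq_append_singleton_iff,
      Set.ofPred_and]
    exact ih.inter ((digit_mono w).measurable (measurableSet_singleton i))

lemma IsConsistentWeight.code_preimage_cyl_inter (hp : IsConsistentWeight p)
    (w : List (Fin M)) : code p ⁻¹' cyl w ∩ cell p [] = cell p w := by
  induction w using List.reverseRecOn with
  | nil => rw [cyl_nil, Set.preimage_univ, Set.univ_inter]
  | append_singleton w i ih =>
    ext t
    rw [code_preimage_cyl] at ih ⊢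
    simp only [Set.mem_inter_iff, Set.mem_ofPred_eq, List.length_append, List.length_singleton,
      codeWord_succ_eq_append_singleton_iff, Set.ext_iff] at ih ⊢
    constructor
    · rintro ⟨⟨hw, rfl⟩, ht⟩
      exact hp.mem_cell_digit ((ih t).1 ⟨hw, ht⟩)
    · intro ht
      obtain ⟨hw, ht0⟩ := (ih t).2 (hp.cell_append_singleton_subset w i ht)
      exact ⟨⟨hw, hp.digit_eq_of_mem_cell ht⟩, ht0⟩

end Coding

theorem IsConsistentWeight.exists_isProbabilityMeasure_cyl_eq {M : ℕ} {p : List (Fin M) → ℝ}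
    (hp : IsConsistentWeight p) :
    ∃ μ : Measure (ℕ → Fin M), IsProbabilityMeasure μ ∧
      ∀ w, μ (cyl w) = ENNReal.ofReal (p w) := by
  have := hp.neZero
  have hμ : ∀ w, (volume.restrict (cell p [])).map (code p) (cyl w) = ENNReal.ofReal (p w) := by
    intro w
    rw [Measure.map_apply measurable_code (measurableSet_cyl w),
      Measure.restrict_apply (measurable_code (measurableSet_cyl w)),
      hp.code_preimage_cyl_inter, volume_cell]
  refine ⟨_, ⟨?_⟩, hμ⟩
  rw [← cyl_nil, hμ, hp.nil, ENNReal.ofReal_one]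

theorem IsConsistentWeight.exists_measurePreserving_shift_cyl_eq {M : ℕ}
    {p : List (Fin M) → ℝ} (hp : IsConsistentWeight p)
    (hcons : ∀ w, ∑ i, p (i :: w) = p w) :
    ∃ μ : Measure (ℕ → Fin M), IsProbabilityMeasure μ ∧ MeasurePreserving shift μ μ ∧
      ∀ w, μ (cyl w) = ENNReal.ofReal (p w) := by
  obtain ⟨μ, hprob, hμ⟩ := hp.exists_isProbabilityMeasure_cyl_eq
  refine ⟨μ, hprob, measurePreserving_shift fun w => ?_, hμ⟩
  simp only [hμ]
  rw [← ENNReal.ofReal_sum_of_nonneg fun i _ => hp.nonneg _, hcons]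

open scoped ComplexOrder MatrixOrder in
lemma Matrix.PosSemidef.trace_mul_nonneg {𝕜 n : Type*} [RCLike 𝕜] [Fintype n]
    {P N : Matrix n n 𝕜} (hP : P.PosSemidef) (hN : N.PosSemidef) : 0 ≤ (P * N).trace := by
  classical
  obtain ⟨S, rfl⟩ := CStarAlgebra.nonneg_iff_eq_star_mul_self.mp hP.nonneg
  rw [Matrix.star_eq_conjTranspose, Matrix.mul_assoc, Matrix.trace_mul_comm]
  simpa [Matrix.mul_assoc] using (hN.mul_mul_conjTranspose_same S).trace_nonneg

section Kusuoka

variable {M d : ℕ} (A : Fin M → Matrix (Fin d) (Fin d) ℝ)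

@[simp] lemma listProd_nil : listProd A [] = 1 := by
  simp [listProd]

@[simp] lemma listProd_append_singleton (w : List (Fin M)) (i : Fin M) :
    listProd A (w ++ [i]) = A i * listProd A w := by
  simp [listProd]

@[simp] lemma listProd_cons (w : List (Fin M)) (i : Fin M) :
    listProd A (i :: w) = listProd A w * A i := by
  simp [listProd]

noncomputable def kusuokaWeight (Q Qh : Matrix (Fin d) (Fin d) ℝ) (P : ℝ) (w : List (Fin M)) :
    ℝ :=
  Real.exp (-(w.length : ℝ) * P) * (Qh * (listProd A w)ᵀ * Q * listProd A w).trace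

variable {A} {Q Qh : Matrix (Fin d) (Fin d) ℝ} {P : ℝ}

lemma kusuokaWeight_nonneg (hQ : Q.PosSemidef) (hQh : Qh.PosSemidef) (w : List (Fin M)) :
    0 ≤ kusuokaWeight A Q Qh P w := by
  refine mul_nonneg (Real.exp_nonneg _) ?_
  have hB := hQ.conjTranspose_mul_mul_same (listProd A w)
  rw [conjTranspose_eq_transpose_of_trivial] at hB
  simpa only [Matrix.mul_assoc] using hQh.trace_mul_nonneg hB

lemma exp_neg_succ_mul_mul_exp (n : ℕ) (P : ℝ) :
    Real.exp (-((n + 1 : ℕ) : ℝ) * P) * Real.exp P = Real.exp (-(n : ℝ) * P) := by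
  rw [← Real.exp_add]
  push_cast
  ring_nf

lemma sum_kusuokaWeight_append_singleton (hQe : ∑ i, (A i)ᵀ * Q * A i = Real.exp P • Q)
    (w : List (Fin M)) : ∑ i, kusuokaWeight A Q Qh P (w ++ [i]) = kusuokaWeight A Q Qh P w := by
  have hterm : ∀ i, kusuokaWeight A Q Qh P (w ++ [i]) =
      Real.exp (-((w.length + 1 : ℕ) : ℝ) * P) *
        (Qh * (listProd A w)ᵀ * ((A i)ᵀ * Q * A i) * listProd A w).trace := fun i => by
    simp only [kusuokaWeight, listProd_append_singleton, List.length_append, List.length_singleton,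
      transpose_mul, Matrix.mul_assoc]
  simp only [hterm, ← Finset.mul_sum, ← trace_sum, ← Finset.sum_mul, hQe, Matrix.mul_smul,
    Matrix.smul_mul, trace_smul, smul_eq_mul]
  rw [← mul_assoc, exp_neg_succ_mul_mul_exp]
  rfl

lemma sum_kusuokaWeight_cons (hQhe : ∑ i, A i * Qh * (A i)ᵀ = Real.exp P • Qh)
    (w : List (Fin M)) : ∑ i, kusuokaWeight A Q Qh P (i :: w) = kusuokaWeight A Q Qh P w := by
  set N := (listProd A w)ᵀ * Q * listProd A w
  have hterm : ∀ i, kusuokaWeight A Q Qh P (i :: w) =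
      Real.exp (-((w.length + 1 : ℕ) : ℝ) * P) * (A i * Qh * (A i)ᵀ * N).trace := fun i => by
    rw [show A i * Qh * (A i)ᵀ * N = A i * (Qh * (A i)ᵀ * N) by simp only [Matrix.mul_assoc],
      trace_mul_comm (A i)]
    simp only [kusuokaWeight, N, listProd_cons, List.length_cons, transpose_mul, Matrix.mul_assoc]
  simp only [hterm, ← Finset.mul_sum, ← trace_sum, ← Finset.sum_mul, hQhe, Matrix.smul_mul,
    trace_smul, smul_eq_mul]
  rw [← mul_assoc, exp_neg_succ_mul_mul_exp]
  simp only [kusuokaWeight, N, Matrix.mul_assoc]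

lemma isConsistentWeight_kusuokaWeight (hQ : Q.PosSemidef) (hQh : Qh.PosSemidef)
    (hQe : ∑ i, (A i)ᵀ * Q * A i = Real.exp P • Q) (htr : (Q * Qh).trace = 1) :
    IsConsistentWeight (kusuokaWeight A Q Qh P) where
  nil := by simp [kusuokaWeight, trace_mul_comm Qh, htr]
  nonneg := kusuokaWeight_nonneg hQ hQh
  sum_append_singleton := sum_kusuokaWeight_append_singleton hQe

end Kusuoka

theorem stmt_18_general {M d : ℕ}
    (A : Fin M → Matrix (Fin d) (Fin d) ℝ)
    (Q Qh : Matrix (Fin d) (Fin d) ℝ) (hQ : Q.PosDef) (hQh : Qh.PosDef)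
    (hQe : (∑ i, (A i)ᵀ * Q * A i) = Real.exp (pressure A 2).toReal • Q)
    (hQhe : (∑ i, A i * Qh * (A i)ᵀ) = Real.exp (pressure A 2).toReal • Qh)
    (htr : (Q * Qh).trace = 1) :
    ∃ μ : Measure (ℕ → Fin M), IsProbabilityMeasure μ ∧
      MeasurePreserving (shift (M := M)) μ μ ∧
      ∀ w : List (Fin M), w ≠ [] →
        μ (cyl w) = ENNReal.ofReal
          (Real.exp (-(w.length : ℝ) * (pressure A 2).toReal) *
            (Qh * (listProd A w)ᵀ * Q * listProd A w).trace) := by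
  have hp := isConsistentWeight_kusuokaWeight hQ.posSemidef hQh.posSemidef hQe htr
  obtain ⟨μ, hprob, hshift, hμ⟩ :=
    hp.exists_measurePreserving_shift_cyl_eq (sum_kusuokaWeight_cons hQhe)
  exact ⟨μ, hprob, hshift, fun w _ => hμ w⟩

/-- existence of the Kusuoka measure: a shift-invariant Borel probability measure
whose cylinder values are `e^{-nP} tr( Q̂ (A_{x_n}⋯A_{x_1})ᵀ Q (A_{x_n}⋯A_{x_1}) )`. -/
theorem stmt_18 {M d : ℕ} (hM : 2 ≤ M) (hd : 2 ≤ d)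
    (A : Fin M → Matrix (Fin d) (Fin d) ℝ) (hA : IsIrredTuple A)
    (Q Qh : Matrix (Fin d) (Fin d) ℝ) (hQ : Q.PosDef) (hQh : Qh.PosDef)
    (hQe : (∑ i, (A i)ᵀ * Q * A i) = Real.exp (pressure A 2).toReal • Q)
    (hQhe : (∑ i, A i * Qh * (A i)ᵀ) = Real.exp (pressure A 2).toReal • Qh)
    (htr : (Q * Qh).trace = 1) :
    ∃ μ : Measure (ℕ → Fin M), IsProbabilityMeasure μ ∧
      MeasurePreserving (shift (M := M)) μ μ ∧
      ∀ w : List (Fin M), w ≠ [] →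
        μ (cyl w) = ENNReal.ofReal
          (Real.exp (-(w.length : ℝ) * (pressure A 2).toReal) *
            (Qh * (listProd A w)ᵀ * Q * listProd A w).trace) :=
  stmt_18_general A Q Qh hQ hQh hQe hQhe htr
end

section
/- Let M ≥ 2, d ≥ 2, let A = (A_1,…,A_M) be an irreducible tuple of d×d real matrices, and set P := P(A,2) (which is finite by irreducibility). Let Q and Q̂ be symmetric positive definite d×d real matrices satisfying Σ_{i=1}^M A_i^T Q A_i = e^P Q, Σ_{i=1}^M A_i Q̂ A_i^T = e^P Q̂, and tr(Q Q̂) = 1, and let μ be a Borel probability measure on Σ_M with μ([x_1⋯x_n]) = e^{−nP} tr( Q̂ (A_{x_n}⋯A_{x_1})^T Q (A_{x_n}⋯A_{x_1}) ) for every cylinder. Then μ satisfies the Gibbs inequality for (A,2) with pressure constant P: there exists C > 0 such that C^{−1} μ([x_1⋯x_n]) ≤ e^{−nP} ‖A_{x_n}⋯A_{x_1}‖² ≤ C μ([x_1⋯x_n]) for every n ≥ 1 and all x_1,…,x_n ∈ {1,…,M}. -/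
open MeasureTheory Filter Topology Matrix

/-!
Positive definiteness of `Q` and `Q̂` makes `B ↦ tr(Q̂ Bᵀ Q B)` comparable to `‖B‖²`: in the Loewner
order `a • 1 ≤ Q ≤ ‖Q‖ • 1` with `a > 0` (and likewise for `Q̂`), which sandwiches `tr(Q̂ Bᵀ Q B)`
between multiples of `tr(Bᵀ B)`; and `‖B‖² ≤ tr(Bᵀ B) ≤ d ‖B‖²` because the `d` eigenvalues of
`Bᵀ B` are nonnegative and the largest of them is `‖Bᵀ B‖ = ‖B‖²`. Multiplying by
`e^{-nP}` turns this into the Gibbs inequality for the measure given on cylinders by the trace formula.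
-/

namespace Matrix

open scoped MatrixOrder Matrix.Norms.L2Operator
open IsometricContinuousFunctionalCalculus

variable {n : Type*}

lemma star_eq_transpose {α : Type*} [Star α] [TrivialStar α] (B : Matrix n n α) : star B = Bᵀ :=
  conjTranspose_eq_transpose_of_trivial B

variable [Fintype n]

lemma trace_mono {X Y : Matrix n n ℝ} (h : X ≤ Y) : X.trace ≤ Y.trace := by
  have := (le_iff.mp h).trace_nonneg
  rw [trace_sub] at this
  linarith

variable [DecidableEq n]

lemma trace_mul_le_trace_mul {P X Y : Matrix n n ℝ} (hP : 0 ≤ P) (h : X ≤ Y) :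
    (P * X).trace ≤ (P * Y).trace := by
  obtain ⟨L, rfl⟩ := CStarAlgebra.nonneg_iff_eq_star_mul_self.mp hP
  simpa only [mul_assoc, trace_mul_comm (star L)] using
    trace_mono (star_right_conjugate_le_conjugate h L)

lemma trace_mul_smul_one (P : Matrix n n ℝ) (c : ℝ) :
    (P * c • (1 : Matrix n n ℝ)).trace = c * P.trace := by
  rw [Matrix.mul_smul, Matrix.mul_one, trace_smul, smul_eq_mul]

lemma trace_mul_star_mul_smul_one_mul (P B : Matrix n n ℝ) (c : ℝ) :
    (P * (star B * (c • 1) * B)).trace = c * ((Bᵀ * B) * P).trace := by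
  rw [star_eq_transpose, Matrix.mul_smul, Matrix.mul_one, Matrix.smul_mul, Matrix.mul_smul,
    trace_smul, smul_eq_mul, trace_mul_comm]

lemma norm_le_trace_of_nonneg {P : Matrix n n ℝ} (hP : 0 ≤ P) : ‖P‖ ≤ P.trace := by
  rcases subsingleton_or_nontrivial (Matrix n n ℝ) with _ | _
  · simp [Subsingleton.elim P 0]
  have hP' : P.PosSemidef := nonneg_iff_posSemidef.mp hP
  obtain ⟨x, hx, hxP⟩ := (isGreatest_norm_spectrum (𝕜 := ℝ) P hP'.1.isSelfAdjoint).1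
  obtain ⟨i, rfl⟩ := hP'.1.spectrum_real_eq_range_eigenvalues ▸ hx
  rw [← hxP, hP'.1.trace_eq_sum_eigenvalues, RCLike.ofReal_real_eq_id]
  dsimp only [id]
  rw [Real.norm_of_nonneg (hP'.eigenvalues_nonneg i)]
  exact Finset.single_le_sum (fun j _ => hP'.eigenvalues_nonneg j) (Finset.mem_univ i)

lemma IsHermitian.le_norm_smul_one {Q : Matrix n n ℝ} (hQ : Q.IsHermitian) :
    Q ≤ ‖Q‖ • (1 : Matrix n n ℝ) := by
  rw [← Algebra.algebraMap_eq_smul_one]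
  exact le_algebraMap_of_spectrum_le (fun x hx =>
    (Real.le_norm_self x).trans (norm_spectrum_le Q hx hQ.isSelfAdjoint)) hQ.isSelfAdjoint

lemma PosDef.exists_pos_smul_one_le {Q : Matrix n n ℝ} (hQ : Q.PosDef) :
    ∃ a : ℝ, 0 < a ∧ a • (1 : Matrix n n ℝ) ≤ Q := by
  rcases subsingleton_or_nontrivial (Matrix n n ℝ) with _ | _
  · exact ⟨1, one_pos, (Subsingleton.elim _ _).le⟩
  have h := hQ.isStrictlyPositive
  obtain ⟨a, ha, haQ⟩ :=
    (CFC.exists_pos_algebraMap_le_iff h.isSelfAdjoint).2 fun x hx ↦ h.spectrum_pos hx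
  exact ⟨a, ha, by rwa [Algebra.algebraMap_eq_smul_one] at haQ⟩

lemma norm_sq_le_trace_transpose_mul_self (B : Matrix n n ℝ) : ‖B‖ ^ 2 ≤ (Bᵀ * B).trace := by
  rw [← star_eq_transpose, sq, ← CStarRing.norm_star_mul_self]
  exact norm_le_trace_of_nonneg (star_mul_self_nonneg B)

lemma trace_transpose_mul_self_le (B : Matrix n n ℝ) :
    (Bᵀ * B).trace ≤ Fintype.card n * ‖B‖ ^ 2 := by
  have h := trace_mono (IsHermitian.le_norm_smul_one (IsSelfAdjoint.star_mul_self B))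
  rwa [CStarRing.norm_star_mul_self, trace_smul, trace_one, smul_eq_mul, ← sq, mul_comm,
    star_eq_transpose] at h

lemma trace_mul_transpose_mul_mul_le {Q Qh : Matrix n n ℝ} {b b' : ℝ} (hb : 0 ≤ b)
    (hQ : Q ≤ b • 1) (hQh₀ : 0 ≤ Qh) (hQh : Qh ≤ b' • 1) (B : Matrix n n ℝ) :
    (Qh * Bᵀ * Q * B).trace ≤ b * b' * (Bᵀ * B).trace := by
  have hBB : 0 ≤ Bᵀ * B := star_eq_transpose B ▸ star_mul_self_nonneg B
  calc (Qh * Bᵀ * Q * B).trace = (Qh * (star B * Q * B)).trace := by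
        simp only [star_eq_transpose, mul_assoc]
    _ ≤ (Qh * (star B * (b • 1) * B)).trace :=
        trace_mul_le_trace_mul hQh₀ (star_left_conjugate_le_conjugate hQ B)
    _ = b * ((Bᵀ * B) * Qh).trace := trace_mul_star_mul_smul_one_mul Qh B b
    _ ≤ b * ((Bᵀ * B) * (b' • 1)).trace :=
        mul_le_mul_of_nonneg_left (trace_mul_le_trace_mul hBB hQh) hb
    _ = b * b' * (Bᵀ * B).trace := by rw [trace_mul_smul_one, mul_assoc]

lemma le_trace_mul_transpose_mul_mul {Q Qh : Matrix n n ℝ} {a a' : ℝ} (ha : 0 ≤ a)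
    (ha' : 0 ≤ a') (hQ : a • 1 ≤ Q) (hQh : a' • 1 ≤ Qh) (B : Matrix n n ℝ) :
    a * a' * (Bᵀ * B).trace ≤ (Qh * Bᵀ * Q * B).trace := by
  have hBB : 0 ≤ Bᵀ * B := star_eq_transpose B ▸ star_mul_self_nonneg B
  have hQh₀ : 0 ≤ Qh := (smul_nonneg ha' zero_le_one).trans hQh
  calc a * a' * (Bᵀ * B).trace = a * ((Bᵀ * B) * (a' • 1)).trace := by
        rw [trace_mul_smul_one, mul_assoc]
    _ ≤ a * ((Bᵀ * B) * Qh).trace :=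
        mul_le_mul_of_nonneg_left (trace_mul_le_trace_mul hBB hQh) ha
    _ = (Qh * (star B * (a • 1) * B)).trace := (trace_mul_star_mul_smul_one_mul Qh B a).symm
    _ ≤ (Qh * (star B * Q * B)).trace :=
        trace_mul_le_trace_mul hQh₀ (star_left_conjugate_le_conjugate hQ B)
    _ = (Qh * Bᵀ * Q * B).trace := by
        simp only [star_eq_transpose, mul_assoc]

lemma PosDef.exists_trace_conj_comparable_opNorm_sq {Q Qh : Matrix n n ℝ} (hQ : Q.PosDef)
    (hQh : Qh.PosDef) :
    ∃ C : ℝ, 0 < C ∧ ∀ B : Matrix n n ℝ,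
      C⁻¹ * (Qh * Bᵀ * Q * B).trace ≤ opNorm B ^ 2 ∧
        opNorm B ^ 2 ≤ C * (Qh * Bᵀ * Q * B).trace := by
  obtain ⟨a, ha, haQ⟩ := hQ.exists_pos_smul_one_le
  obtain ⟨a', ha', haQh⟩ := hQh.exists_pos_smul_one_le
  have hc : 0 < a * a' := mul_pos ha ha'
  refine ⟨max (‖Q‖ * ‖Qh‖ * Fintype.card n) (a * a')⁻¹, by positivity, fun B => ?_⟩
  -- `opNorm` is definitionally the norm of `Matrix.Norms.L2Operator`.
  change _ ≤ ‖B‖ ^ 2 ∧ ‖B‖ ^ 2 ≤ _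
  have hupper : (Qh * Bᵀ * Q * B).trace ≤ ‖Q‖ * ‖Qh‖ * Fintype.card n * ‖B‖ ^ 2 := by
    rw [mul_assoc _ (Fintype.card n : ℝ)]
    exact (trace_mul_transpose_mul_mul_le (norm_nonneg Q) hQ.1.le_norm_smul_one
      (nonneg_iff_posSemidef.mpr hQh.posSemidef) hQh.1.le_norm_smul_one B).trans
      (mul_le_mul_of_nonneg_left (trace_transpose_mul_self_le B) (by positivity))
  have hlower : a * a' * ‖B‖ ^ 2 ≤ (Qh * Bᵀ * Q * B).trace :=
    (mul_le_mul_of_nonneg_left (norm_sq_le_trace_transpose_mul_self B) hc.le).trans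
      (le_trace_mul_transpose_mul_mul ha.le ha'.le haQ haQh B)
  constructor
  · rw [inv_mul_le_iff₀ (by positivity)]
    exact hupper.trans (mul_le_mul_of_nonneg_right (le_max_left _ _) (sq_nonneg _))
  · calc ‖B‖ ^ 2 ≤ (a * a')⁻¹ * (Qh * Bᵀ * Q * B).trace := by rwa [le_inv_mul_iff₀ hc]
      _ ≤ _ := mul_le_mul_of_nonneg_right (le_max_right _ _)
          ((mul_nonneg hc.le (sq_nonneg _)).trans hlower)

end Matrix

theorem stmt_19_general {M d : ℕ}
    (A : Fin M → Matrix (Fin d) (Fin d) ℝ)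
    (Q Qh : Matrix (Fin d) (Fin d) ℝ) (hQ : Q.PosDef) (hQh : Qh.PosDef)
    (μ : Measure (ℕ → Fin M))
    (hμ : ∀ w : List (Fin M), w ≠ [] →
      μ (cyl w) = ENNReal.ofReal
        (Real.exp (-(w.length : ℝ) * (pressure A 2).toReal) *
          (Qh * (listProd A w)ᵀ * Q * listProd A w).trace)) :
    ∃ C : ℝ, 0 < C ∧ IsGibbs A 2 C (pressure A 2).toReal μ := by
  obtain ⟨C, hC, hcomp⟩ := hQ.exists_trace_conj_comparable_opNorm_sq hQh
  refine ⟨C, hC, fun w hw => ?_⟩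
  obtain ⟨hle, hge⟩ := hcomp (listProd A w)
  have hT : 0 ≤ (Qh * (listProd A w)ᵀ * Q * listProd A w).trace :=
    nonneg_of_mul_nonneg_right ((sq_nonneg _).trans hge) hC
  have hE := Real.exp_pos (-(w.length : ℝ) * (pressure A 2).toReal)
  rw [hμ w hw, ENNReal.toReal_ofReal (by positivity), Real.rpow_two, mul_left_comm,
    mul_left_comm C]
  exact ⟨mul_le_mul_of_nonneg_left hle hE.le, mul_le_mul_of_nonneg_left hge hE.le⟩

/-- the Kusuoka measure satisfies the Gibbs inequality for `(A, 2)` with pressure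
constant `P = P(A, 2)`. -/
theorem stmt_19 {M d : ℕ} (hM : 2 ≤ M) (hd : 2 ≤ d)
    (A : Fin M → Matrix (Fin d) (Fin d) ℝ) (hA : IsIrredTuple A)
    (Q Qh : Matrix (Fin d) (Fin d) ℝ) (hQ : Q.PosDef) (hQh : Qh.PosDef)
    (hQe : (∑ i, (A i)ᵀ * Q * A i) = Real.exp (pressure A 2).toReal • Q)
    (hQhe : (∑ i, A i * Qh * (A i)ᵀ) = Real.exp (pressure A 2).toReal • Qh)
    (htr : (Q * Qh).trace = 1)
    (μ : Measure (ℕ → Fin M)) [IsProbabilityMeasure μ]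
    (hμ : ∀ w : List (Fin M), w ≠ [] →
      μ (cyl w) = ENNReal.ofReal
        (Real.exp (-(w.length : ℝ) * (pressure A 2).toReal) *
          (Qh * (listProd A w)ᵀ * Q * listProd A w).trace)) :
    ∃ C : ℝ, 0 < C ∧ IsGibbs A 2 C (pressure A 2).toReal μ :=
  stmt_19_general A Q Qh hQ hQh μ hμ
end
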